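/- Let 𝔤 be a finite-dimensional solvable Lie algebra over ℂ. Every element of 𝔫̄ = {X − ad_{sX} : X ∈ 𝔤} ⊆ 𝔤̄ = Im(ad_s) ⋉ 𝔤 is ad-nilpotent in 𝔤̄; that is, for each X ∈ 𝔤 the operator ad_{(−ad_{sX}, X)} on 𝔤̄ is nilpotent. -/

import Mathlib

open LieAlgebra

variable (M : Type*) [LieRing M] [LieAlgebra ℂ M]

/-- The semidirect product Lie ring `Der(M) ⋉ M`, with bracket
`⁅(D, x), (E, y)⁆ = (⁅D, E⁆, D y − E x + ⁅x, y⁆)`. -/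
noncomputable instance derSemidirectLieRing : LieRing (LieDerivation ℂ M M × M) :=
  { (inferInstance : AddCommGroup (LieDerivation ℂ M M × M)) with
    bracket := fun a b => (⁅a.1, b.1⁆, a.1 b.2 - b.1 a.2 + ⁅a.2, b.2⁆)
    add_lie := by
      intro a b c
      show (⁅a.1 + b.1, c.1⁆, (a.1 + b.1) c.2 - c.1 (a.2 + b.2) + ⁅a.2 + b.2, c.2⁆)
        = (⁅a.1, c.1⁆ + ⁅b.1, c.1⁆, (a.1 c.2 - c.1 a.2 + ⁅a.2, c.2⁆) + (b.1 c.2 - c.1 b.2 + ⁅b.2, c.2⁆))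
      refine Prod.ext (add_lie _ _ _) ?_
      simp only [LieDerivation.add_apply, map_add, add_lie]
      abel
    lie_add := by
      intro a b c
      show (⁅a.1, b.1 + c.1⁆, a.1 (b.2 + c.2) - (b.1 + c.1) a.2 + ⁅a.2, b.2 + c.2⁆)
        = (⁅a.1, b.1⁆ + ⁅a.1, c.1⁆, (a.1 b.2 - b.1 a.2 + ⁅a.2, b.2⁆) + (a.1 c.2 - c.1 a.2 + ⁅a.2, c.2⁆))
      refine Prod.ext (lie_add _ _ _) ?_
      simp only [LieDerivation.add_apply, map_add, lie_add]
      abel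
    lie_self := by
      intro a
      show (⁅a.1, a.1⁆, a.1 a.2 - a.1 a.2 + ⁅a.2, a.2⁆) = (0, 0)
      simp
    leibniz_lie := by
      intro a b c
      show (⁅a.1, ⁅b.1, c.1⁆⁆, a.1 (b.1 c.2 - c.1 b.2 + ⁅b.2, c.2⁆)
              - ⁅b.1, c.1⁆ a.2 + ⁅a.2, b.1 c.2 - c.1 b.2 + ⁅b.2, c.2⁆⁆)
        = (⁅⁅a.1, b.1⁆, c.1⁆, ⁅a.1, b.1⁆ c.2 - c.1 (a.1 b.2 - b.1 a.2 + ⁅a.2, b.2⁆)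
              + ⁅a.1 b.2 - b.1 a.2 + ⁅a.2, b.2⁆, c.2⁆)
          + (⁅b.1, ⁅a.1, c.1⁆⁆, b.1 (a.1 c.2 - c.1 a.2 + ⁅a.2, c.2⁆)
              - ⁅a.1, c.1⁆ b.2 + ⁅b.2, a.1 c.2 - c.1 a.2 + ⁅a.2, c.2⁆⁆)
      refine Prod.ext (leibniz_lie _ _ _) ?_
      simp only [Prod.snd_add, LieDerivation.commutator_apply, map_sub, map_add,
        LieDerivation.apply_lie_eq_add, lie_add, add_lie, lie_sub, sub_lie, lie_lie]
      rw [← lie_skew (c.1 a.2) b.2]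
      abel }

noncomputable instance derSemidirectLieAlgebra :
    LieAlgebra ℂ (LieDerivation ℂ M M × M) :=
  { lie_smul := by
      intro c a b
      show (⁅a.1, c • b.1⁆, a.1 (c • b.2) - (c • b.1) a.2 + ⁅a.2, c • b.2⁆)
        = c • (⁅a.1, b.1⁆, a.1 b.2 - b.1 a.2 + ⁅a.2, b.2⁆)
      refine Prod.ext (lie_smul _ _ _) ?_
      simp only [Prod.smul_snd, map_smul, LieDerivation.smul_apply, lie_smul, smul_sub, smul_add]
      try abel }

/-! For each `X`, the operator `ad (s X)` on `End L` is semisimple and preserves the subspace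
`s(L)`, since `⁅s X, s Y⁆ = s ⁅X, Y⁆`. If `⁅s X, s Y⁆ = c • s Y` with `c ≠ 0`, then `s Y` shifts
the generalized eigenspaces of `s X` by `c`, so it is nilpotent; being semisimple, it vanishes.
Hence `ad (s X)` is zero on `s(L)`, i.e. the image of `s` is abelian. Consequently
`ad (-(s X), X)` kills the derivation component of every `p` with `p.1 ∈ range s`, while on
`0 × L` it acts as the nilpotent operator `ad X - s X`. -/

namespace Module.End

section CommRing

variable {R V : Type*} [CommRing R] [AddCommGroup V] [Module R V] {T E : End R V} {c : R}

theorem mapsTo_maxGenEigenspace_of_mul_sub_mul_eq_smul (h : T * E - E * T = c • E) (μ : R) :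
    Set.MapsTo E (T.maxGenEigenspace μ) (T.maxGenEigenspace (μ + c)) := by
  have hsemiconj : SemiconjBy E (T - μ • 1) (T - (μ + c) • 1) := by
    have hTE : T * E = E * T + c • E := by rw [← h]; abel
    rw [SemiconjBy, mul_sub, sub_mul, hTE, smul_mul_assoc, one_mul, mul_smul_comm, mul_one,
      add_smul]
    abel
  intro v hv
  obtain ⟨k, hk⟩ := (mem_maxGenEigenspace _ _ _).1 hv
  refine (mem_maxGenEigenspace _ _ _).2 ⟨k, ?_⟩
  rw [← mul_apply, ← (hsemiconj.pow_right k).eq, mul_apply, hk, map_zero]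

theorem mapsTo_pow_maxGenEigenspace_of_mul_sub_mul_eq_smul (h : T * E - E * T = c • E)
    (μ : R) (j : ℕ) :
    Set.MapsTo (E ^ j) (T.maxGenEigenspace μ) (T.maxGenEigenspace (μ + j • c)) := by
  induction j with
  | zero => intro v hv; simpa using hv
  | succ j ih =>
    rw [pow_succ', coe_mul, succ_nsmul, ← add_assoc]
    exact (mapsTo_maxGenEigenspace_of_mul_sub_mul_eq_smul h _).comp ih

end CommRing

variable {K V : Type*} [Field K] [IsAlgClosed K] [CharZero K] [AddCommGroup V] [Module K V]
  [FiniteDimensional K V]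

theorem isNilpotent_of_mul_sub_mul_eq_smul {T E : End K V} {c : K} (hc : c ≠ 0)
    (h : T * E - E * T = c • E) : IsNilpotent E := by
  have hfin : {μ : K | T.maxGenEigenspace μ ≠ ⊥}.Finite :=
    WellFoundedGT.finite_ne_bot_of_iSupIndep T.independent_maxGenEigenspace
  have hle : ∀ μ, T.maxGenEigenspace μ ≤ E.maxGenEigenspace 0 := by
    intro μ v hv
    have hinj : Function.Injective fun j : ℕ ↦ μ + j • c := fun i j hij ↦ by
      simpa [hc] using hij
    obtain ⟨j, hj⟩ := (hfin.preimage hinj.injOn).exists_notMem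
    have hbot : T.maxGenEigenspace (μ + j • c) = ⊥ := not_not.1 hj
    have hEv : (E ^ j) v = 0 := by
      simpa only [hbot, SetLike.mem_coe, Submodule.mem_bot] using
        mapsTo_pow_maxGenEigenspace_of_mul_sub_mul_eq_smul h μ j hv
    exact (mem_maxGenEigenspace _ _ _).2 ⟨j, by simpa using hEv⟩
  rw [isNilpotent_iff_of_finite]
  intro v
  have hv : v ∈ E.maxGenEigenspace 0 :=
    iSup_le hle (T.iSup_maxGenEigenspace_eq_top ▸ Submodule.mem_top)
  simpa using (mem_maxGenEigenspace _ _ _).1 hv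

theorem commute_of_mem_of_isSemisimple {T : End K V} (hT : T.IsSemisimple)
    {W : Submodule K (End K V)} (hTW : ∀ E ∈ W, T * E - E * T ∈ W)
    (hW : ∀ E ∈ W, E.IsSemisimple) {E : End K V} (hE : E ∈ W) : Commute T E := by
  set adT : End K (End K V) := LinearMap.mulLeft K T - LinearMap.mulRight K T
  have hadT : IsSemisimple adT := by
    have := LieAlgebra.ad_isSemisimple_of_isSemisimple hT
    rwa [LieAlgebra.ad_eq_lmul_left_sub_lmul_right] at this
  have hinv : W ∈ adT.invtSubmodule := (mem_invtSubmodule _).2 hTW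
  have hzero : adT.restrict hinv = 0 := by
    refine (hadT.restrict hinv).eq_zero_iff_forall_eigenvalue.2 fun μ hμ ↦ ?_
    obtain ⟨⟨F, hFW⟩, hF⟩ := hμ.exists_hasEigenvector
    by_contra hμ0
    have hTF : T * F - F * T = μ • F := congrArg Subtype.val hF.apply_eq_smul
    exact hF.2 <| Subtype.ext <|
      eq_zero_of_isNilpotent_isSemisimple (isNilpotent_of_mul_sub_mul_eq_smul hμ0 hTF) (hW F hFW)
  exact sub_eq_zero.1 (congrArg Subtype.val (LinearMap.congr_fun hzero ⟨E, hE⟩))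

end Module.End

section ImageAbelian

attribute [local instance] LieRing.ofAssociativeRing

theorem LieDerivation.lie_map_eq_zero_of_forall_isSemisimple {K L : Type*} [Field K]
    [IsAlgClosed K] [CharZero K] [LieRing L] [LieAlgebra K L] [FiniteDimensional K L]
    (s : L →ₗ[K] LieDerivation K L L)
    (hss : ∀ X : L, Module.End.IsSemisimple ((s X).toLinearMap : Module.End K L))
    (hhom : ∀ X Y : L, s ⁅X, Y⁆ = ⁅s X, s Y⁆) (X Y : L) : ⁅s X, s Y⁆ = 0 := by
  let W : Submodule K (Module.End K L) :=
    LinearMap.range ((LieDerivation.toLinearMapLieHom K L).toLinearMap ∘ₗ s)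
  have hcomm : Commute (s X).toLinearMap (s Y).toLinearMap := by
    refine Module.End.commute_of_mem_of_isSemisimple (hss X) (W := W) ?_ ?_ ⟨Y, rfl⟩
    · rintro _ ⟨Z, rfl⟩
      refine ⟨⁅X, Z⁆, ?_⟩
      rw [LinearMap.comp_apply, hhom, LieHom.coe_toLinearMap, LieHom.map_lie, Ring.lie_def]
      rfl
    · rintro _ ⟨Z, rfl⟩
      exact hss Z
  apply LieDerivation.toLinearMapLieHom_injective K L
  rw [LieHom.map_lie, map_zero, Ring.lie_def, sub_eq_zero]
  exact hcomm.eq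

end ImageAbelian

section DerSemidirect

variable {L : Type*} [LieRing L] [LieAlgebra ℂ L]

theorem derSemidirect_lie_fst (a b : LieDerivation ℂ L L × L) : ⁅a, b⁆.1 = ⁅a.1, b.1⁆ := rfl

theorem derSemidirect_lie_zero_fst (a : LieDerivation ℂ L L × L) (z : L) :
    ⁅a, ((0 : LieDerivation ℂ L L), z)⁆ = (0, a.1 z + ⁅a.2, z⁆) := by
  show (⁅a.1, 0⁆, a.1 z - (0 : LieDerivation ℂ L L) a.2 + ⁅a.2, z⁆) = _
  simp

theorem derSemidirect_ad_pow_apply_zero_fst (a : LieDerivation ℂ L L × L) (z : L) (n : ℕ) :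
    (ad ℂ _ a ^ n) ((0 : LieDerivation ℂ L L), z) =
      (0, (((a.1 : Module.End ℂ L) + ad ℂ L a.2) ^ n) z) := by
  induction n with
  | zero => rfl
  | succ n ih =>
    rw [pow_succ', Module.End.mul_apply, ih, ad_apply, derSemidirect_lie_zero_fst, pow_succ',
      Module.End.mul_apply]
    rfl

end DerSemidirect

theorem nbar_elements_ad_nilpotent_general
    (L : Type*) [LieRing L] [LieAlgebra ℂ L] [FiniteDimensional ℂ L]
    (s : L →ₗ[ℂ] LieDerivation ℂ L L)
    (hss : ∀ X : L, Module.End.IsSemisimple ((s X).toLinearMap : Module.End ℂ L))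
    (hnil : ∀ X : L, IsNilpotent (LieAlgebra.ad ℂ L X - (s X).toLinearMap))
    (hhom : ∀ X Y : L, s ⁅X, Y⁆ = ⁅s X, s Y⁆) :
    ∀ X : L, ∃ n : ℕ, ∀ p : LieDerivation ℂ L L × L, p.1 ∈ LinearMap.range s →
      ((LieAlgebra.ad ℂ (LieDerivation ℂ L L × L) ((-(s X), X) : LieDerivation ℂ L L × L)) ^ n)
        p = 0 := by
  intro X
  obtain ⟨k, hk⟩ := hnil X
  refine ⟨k + 1, fun p ⟨Y, hY⟩ ↦ ?_⟩
  set a : LieDerivation ℂ L L × L := (-(s X), X)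
  have hp : ⁅a, p⁆ = (0, ⁅a, p⁆.2) := by
    refine Prod.ext ?_ rfl
    rw [derSemidirect_lie_fst, ← hY, neg_lie,
      LieDerivation.lie_map_eq_zero_of_forall_isSemisimple s hss hhom, neg_zero]
  have hN : (a.1 : Module.End ℂ L) + ad ℂ L a.2 = ad ℂ L X - (s X).toLinearMap := by
    rw [LieDerivation.coe_neg_linearMap, neg_add_eq_sub]
  rw [pow_succ, Module.End.mul_apply, ad_apply, hp, derSemidirect_ad_pow_apply_zero_fst, hN, hk]
  rfl

/-- Let `𝔤` be a finite-dimensional solvable Lie algebra over `ℂ`.  Every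
element of `𝔫̄ = {X − ad_{sX} : X ∈ 𝔤} ⊆ 𝔤̄ = Im(ad_s) ⋉ 𝔤` is ad-nilpotent in `𝔤̄`: for
each `X ∈ 𝔤` some power of the operator `ad (−ad_{sX}, X)` kills every element of `𝔤̄`
(the subalgebra of `Der(𝔤) ⋉ 𝔤` of pairs with derivation component in `Im(ad_s)`). -/
theorem nbar_elements_ad_nilpotent
    (L : Type*) [LieRing L] [LieAlgebra ℂ L] [FiniteDimensional ℂ L]
    [LieAlgebra.IsSolvable L]
    (s : L →ₗ[ℂ] LieDerivation ℂ L L)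
    (hss : ∀ X : L, Module.End.IsSemisimple ((s X).toLinearMap : Module.End ℂ L))
    (hnil : ∀ X : L, IsNilpotent (LieAlgebra.ad ℂ L X - (s X).toLinearMap))
    (hcomm : ∀ X : L, Commute ((s X).toLinearMap) (LieAlgebra.ad ℂ L X - (s X).toLinearMap))
    (hhom : ∀ X Y : L, s ⁅X, Y⁆ = ⁅s X, s Y⁆) :
    ∀ X : L, ∃ n : ℕ, ∀ p : LieDerivation ℂ L L × L, p.1 ∈ LinearMap.range s →
      ((LieAlgebra.ad ℂ (LieDerivation ℂ L L × L) ((-(s X), X) : LieDerivation ℂ L L × L)) ^ n)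
        p = 0 :=
  nbar_elements_ad_nilpotent_general L s hss hnil hhom
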